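/- arXiv:2503.16952 — 6 statements merged into one kernel-verified Lean document; each statement's English description precedes it below -/
import Mathlib

section
/- For n ≥ 2 and integers x, k with 0 ≤ x ≤ n and 0 ≤ k ≤ n-2, one has kr_{k+2}^{(n)}(x) - kr_k^{(n)}(x) = (-4x(n-x))/(n(n-1)) · kr_k^{(n-2)}(x-1), where the right-hand side is interpreted as 0 if x = 0 or x = n. -/
open Finset

/-- The `k`-th Krawtchouk polynomial:
`kr n k x = (1/C(n,k)) * ∑_{j=0}^{k} (-1)^j C(x,j) C(n-x,k-j)`. -/
noncomputable def kr (n k x : ℕ) : ℝ :=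
  (1 / (n.choose k : ℝ)) *
    ∑ j ∈ Finset.range (k + 1), (-1 : ℝ) ^ j * (x.choose j : ℝ) * ((n - x).choose (k - j) : ℝ)

/-!
`c_k = C(n,k) · kr_k^{(n)}(x)` is the coefficient of `t^k` in `P = (1-t)^x (1+t)^(n-x)`, which
solves `(1-t²) P' = ((n-x) - x - n t) P`. Differentiating once more and eliminating `P'` gives
`(1-t²) P'' + 2(n-1) t P' - n(n-1) P = -4x(n-x) (1-t)^(x-1) (1+t)^(n-x-1)`, whose coefficient of
`t^k` reads `(k+1)(k+2) c_{k+2} - (n-k)(n-k-1) c_k = -4x(n-x) C(n-2,k) kr_k^{(n-2)}(x-1)`.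
Dividing by `n(n-1) C(n-2,k) = (k+1)(k+2) C(n,k+2) = (n-k)(n-k-1) C(n,k)` gives the theorem.
-/

theorem Nat.choose_add_two_add_two_mul (m k : ℕ) :
    (m + 2).choose (k + 2) * ((k + 1) * (k + 2)) = (m + 2) * (m + 1) * m.choose k := by
  have h1 := Nat.add_one_mul_choose_eq m k
  have h2 := Nat.add_one_mul_choose_eq (m + 1) (k + 1)
  calc (m + 2).choose (k + 2) * ((k + 1) * (k + 2))
      = (m + 2).choose (k + 2) * (k + 2) * (k + 1) := by ring
    _ = (m + 2) * ((m + 1).choose (k + 1) * (k + 1)) := by rw [← h2]; ring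
    _ = (m + 2) * (m + 1) * m.choose k := by rw [← h1]; ring

theorem Nat.choose_add_two_mul_sub_mul_sub (m k : ℕ) :
    (m + 2).choose k * ((m + 2 - k) * (m + 1 - k)) = (m + 2) * (m + 1) * m.choose k := by
  have h1 := Nat.choose_mul_succ_eq m k
  have h2 := Nat.choose_mul_succ_eq (m + 1) k
  calc (m + 2).choose k * ((m + 2 - k) * (m + 1 - k))
      = (m + 2).choose k * (m + 1 + 1 - k) * (m + 1 - k) := by ring
    _ = (m + 2) * ((m + 1).choose k * (m + 1 - k)) := by rw [← h2]; ring
    _ = (m + 2) * (m + 1) * m.choose k := by rw [← h1]; ring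

namespace Polynomial

variable {R : Type*} [CommRing R]

theorem coeff_one_sub_X_pow (a k : ℕ) :
    ((1 - X : R[X]) ^ a).coeff k = (-1) ^ k * (a.choose k : R) := by
  have h : (1 - X : R[X]) = C (-1) * (X + C (-1)) := by
    simp only [map_neg, map_one]; ring
  rw [h, mul_pow, ← C_pow, coeff_C_mul, coeff_X_add_C_pow]
  rcases le_or_gt k a with hka | hak
  · obtain ⟨d, rfl⟩ := Nat.exists_eq_add_of_le hka
    rw [Nat.add_sub_cancel_left, pow_add, mul_assoc, ← mul_assoc ((-1) ^ d), ← pow_add,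
      Even.neg_one_pow ⟨d, rfl⟩, one_mul]
  · simp [Nat.choose_eq_zero_of_lt hak]

theorem coeff_X_mul_derivative (p : R[X]) (k : ℕ) :
    (X * derivative p).coeff k = k * p.coeff k := by
  cases k with
  | zero => simp
  | succ k => rw [coeff_X_mul, coeff_derivative, mul_comm]; push_cast; rfl

theorem coeff_X_sq_mul_derivative_derivative (p : R[X]) (k : ℕ) :
    (X ^ 2 * derivative (derivative p)).coeff k = k * (k - 1) * p.coeff k := by
  rcases k with _ | _ | k
  · simp
  · simp [coeff_X_pow_mul']
  · rw [coeff_X_pow_mul', if_pos (by omega), show k + 1 + 1 - 2 = k by omega, coeff_derivative,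
      coeff_derivative]
    push_cast; ring

theorem coeff_one_sub_X_sq_mul_derivative_derivative_add (m : R) (p : R[X]) (k : ℕ) :
    ((1 - X ^ 2) * derivative (derivative p) + 2 * (C m - 1) * X * derivative p -
        C m * (C m - 1) * p).coeff k =
      (k + 1) * (k + 2) * p.coeff (k + 2) - (m - k) * (m - k - 1) * p.coeff k := by
  have h1 := coeff_X_mul_derivative p k
  have h2 := coeff_X_sq_mul_derivative_derivative p k
  simp only [sub_mul, one_mul, mul_assoc, coeff_add, coeff_sub, ← C_ofNat, ← C_1, ← C_sub,
    coeff_C_mul, coeff_derivative, h1, h2]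
  push_cast; ring

theorem mul_derivative_pow (p : R[X]) (n : ℕ) :
    p * derivative (p ^ n) = n * derivative p * p ^ n := by
  cases n with
  | zero => simp
  | succ n =>
    rw [derivative_pow_succ, pow_succ]
    simp only [map_add, map_natCast, map_one]
    push_cast
    ring

end Polynomial

open Polynomial

variable (R : Type*) [CommRing R]

noncomputable def krawtchoukGF (a b : ℕ) : R[X] := (1 - X) ^ a * (1 + X) ^ b

variable {R}

theorem coeff_krawtchoukGF (a b k : ℕ) :
    (krawtchoukGF R a b).coeff k =
      ∑ j ∈ range (k + 1), (-1) ^ j * (a.choose j : R) * (b.choose (k - j) : R) := by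
  rw [krawtchoukGF, coeff_mul, Nat.sum_antidiagonal_eq_sum_range_succ_mk]
  refine sum_congr rfl fun j _ => ?_
  rw [coeff_one_sub_X_pow, coeff_one_add_X_pow, mul_assoc]

theorem krawtchoukGF_succ_succ (a b : ℕ) :
    krawtchoukGF R (a + 1) (b + 1) = (1 - X ^ 2) * krawtchoukGF R a b := by
  rw [krawtchoukGF, krawtchoukGF]; ring

theorem one_sub_X_sq_mul_derivative_krawtchoukGF (a b : ℕ) :
    (1 - X ^ 2) * derivative (krawtchoukGF R a b) =
      ((b : R[X]) - (a : R[X]) - ((a : R[X]) + (b : R[X])) * X) * krawtchoukGF R a b := by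
  have hu := mul_derivative_pow (1 - X : R[X]) a
  have hv := mul_derivative_pow (1 + X : R[X]) b
  simp only [derivative_sub, derivative_add, derivative_one, derivative_X] at hu hv
  rw [krawtchoukGF, derivative_mul]
  linear_combination (1 + X) * (1 + X) ^ b * hu + (1 - X) * (1 - X) ^ a * hv

theorem krawtchoukGF_second_order_ode [IsDomain R] (a b : ℕ) :
    (1 - X ^ 2) * derivative (derivative (krawtchoukGF R a b)) +
        2 * ((a + b : R[X]) - 1) * X * derivative (krawtchoukGF R a b) -
        (a + b : R[X]) * ((a + b : R[X]) - 1) * krawtchoukGF R a b =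
      -4 * (a : R[X]) * (b : R[X]) * krawtchoukGF R (a - 1) (b - 1) := by
  have h1 := one_sub_X_sq_mul_derivative_krawtchoukGF (R := R) a b
  have h2 := congrArg derivative h1
  simp only [derivative_mul, derivative_sub, derivative_add, derivative_one, derivative_X,
    derivative_natCast, derivative_X_pow, Nat.cast_ofNat, map_ofNat] at h2
  -- Multiplied by `1 - X²`, the right-hand side becomes `-4ab P` for all `a b`, including the
  -- cases `a = 0`, `b = 0` where `a - 1`, `b - 1` truncate.
  have hshift : (1 - X ^ 2 : R[X]) * ((a : R[X]) * b * krawtchoukGF R (a - 1) (b - 1)) =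
      a * b * krawtchoukGF R a b := by
    rcases a with _ | a
    · simp
    rcases b with _ | b
    · simp
    simp only [Nat.add_sub_cancel, krawtchoukGF_succ_succ]
    ring
  have hw : (1 - X ^ 2 : R[X]) ≠ 0 := fun h => by
    simpa using congrArg (coeff · 0) h
  refine mul_left_cancel₀ hw ?_
  linear_combination (1 - X ^ 2) * h2 +
    ((b : R[X]) - (a : R[X]) + ((a : R[X]) + (b : R[X])) * X) * h1 + 4 * hshift

theorem coeff_krawtchoukGF_add_two [IsDomain R] (a b k : ℕ) :
    (k + 1) * (k + 2) * (krawtchoukGF R a b).coeff (k + 2) -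
        ((a + b : R) - k) * ((a + b : R) - k - 1) * (krawtchoukGF R a b).coeff k =
      -4 * a * b * (krawtchoukGF R (a - 1) (b - 1)).coeff k := by
  have h := congrArg (coeff · k) (krawtchoukGF_second_order_ode (R := R) a b)
  simp only [show (a + b : R[X]) = C (a + b : R) by simp,
    coeff_one_sub_X_sq_mul_derivative_derivative_add] at h
  rw [h, show (-4 * a * b : R[X]) = C (-4 * a * b : R) by
    simp only [map_mul, map_neg, map_ofNat, map_natCast], coeff_C_mul]

theorem kr_eq_coeff_krawtchoukGF_div (n k x : ℕ) :
    kr n k x = (krawtchoukGF ℝ x (n - x)).coeff k / n.choose k := by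
  rw [kr, coeff_krawtchoukGF, one_div_mul_eq_div]

theorem mul_choose_mul_kr_add_two {m k : ℕ} (hk : k ≤ m) (x : ℕ) :
    (m + 2) * (m + 1) * (m.choose k : ℝ) * kr (m + 2) (k + 2) x =
      (k + 1) * (k + 2) * (krawtchoukGF ℝ x (m + 2 - x)).coeff (k + 2) := by
  have h : ((m + 2).choose (k + 2) : ℝ) * ((k + 1) * (k + 2)) =
      (m + 2) * (m + 1) * m.choose k := by
    exact_mod_cast Nat.choose_add_two_add_two_mul m k
  have hC : ((m + 2).choose (k + 2) : ℝ) ≠ 0 := by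
    exact_mod_cast (Nat.choose_pos (by omega)).ne'
  rw [kr_eq_coeff_krawtchoukGF_div, ← h]
  field_simp

theorem mul_choose_mul_kr {m k : ℕ} (hk : k ≤ m) (x : ℕ) :
    (m + 2) * (m + 1) * (m.choose k : ℝ) * kr (m + 2) k x =
      ((m + 2 : ℝ) - k) * ((m + 2 : ℝ) - k - 1) * (krawtchoukGF ℝ x (m + 2 - x)).coeff k := by
  have h := congrArg (Nat.cast : ℕ → ℝ) (Nat.choose_add_two_mul_sub_mul_sub m k)
  push_cast [Nat.cast_sub (by omega : k ≤ m + 2), Nat.cast_sub (by omega : k ≤ m + 1)] at h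
  have hC : ((m + 2).choose k : ℝ) ≠ 0 := by
    exact_mod_cast (Nat.choose_pos (by omega)).ne'
  rw [kr_eq_coeff_krawtchoukGF_div, ← h]
  field_simp
  ring

/-- Difference formula in `k` for Krawtchouk polynomials: for `n ≥ 2`, `0 ≤ x ≤ n`,
`0 ≤ k ≤ n - 2`,
`kr_{k+2}^{(n)}(x) - kr_k^{(n)}(x) = (-4x(n-x))/(n(n-1)) · kr_k^{(n-2)}(x-1)`,
where the right-hand side vanishes when `x = 0` or `x = n` (the factor `x(n-x)` is zero). -/
theorem krawtchouk_diff (n x k : ℕ) (hn : 2 ≤ n) (hx : x ≤ n) (hk : k ≤ n - 2) :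
    kr n (k + 2) x - kr n k x =
      (-4 * (x : ℝ) * ((n : ℝ) - (x : ℝ))) / ((n : ℝ) * ((n : ℝ) - 1)) *
        kr (n - 2) k (x - 1) := by
  obtain ⟨m, rfl⟩ : ∃ m, n = m + 2 := ⟨n - 2, by omega⟩
  rw [Nat.add_sub_cancel] at hk ⊢
  have h2 := mul_choose_mul_kr_add_two hk x
  have h0 := mul_choose_mul_kr hk x
  have hrec := coeff_krawtchoukGF_add_two (R := ℝ) x (m + 2 - x) k
  -- `m - (x - 1)` and `m + 2 - x - 1` differ only at `x = 0`, where the factor `x` vanishes.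
  have hshift : (x : ℝ) * (krawtchoukGF ℝ (x - 1) (m + 2 - x - 1)).coeff k =
      x * (krawtchoukGF ℝ (x - 1) (m - (x - 1))).coeff k := by
    rcases x with _ | x
    · simp
    · rw [show m + 2 - (x + 1) - 1 = m - (x + 1 - 1) by omega]
  have hB : (m.choose k : ℝ) ≠ 0 := by exact_mod_cast (Nat.choose_pos hk).ne'
  rw [kr_eq_coeff_krawtchoukGF_div m k]
  push_cast [Nat.cast_sub hx] at hrec ⊢
  rw [show (m : ℝ) + 2 - 1 = m + 1 by ring]
  field_simp
  linear_combination h2 - h0 + hrec - 4 * ((m : ℝ) + 2 - x) * hshift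
end

section
/- Fix a finite set J ⊆ ℕ and a sequence (u_j : j ∈ J) with 0 ≤ u_j ≤ (1-δ₀)/2 for some δ₀ ∈ (0,1). Then for any nonnegative integer k ≤ |J|, the average over all subsets I ⊆ J with |I| = k of exp(−Σ_{j∈I} u_j) is at most 3·exp(−(δ₀ k)/(20|J|) · Σ_{j∈J} u_j). -/
open Finset Real



-- (a+b)^(k+1) ≥ a^(k+1) + (k+1) a^k b  for a > 0, a+b ≥ 0
lemma key_bernoulli (a b : ℝ) (ha : 0 < a) (hab : 0 ≤ a + b) (k : ℕ) :
    a^(k+1) + (k+1) * a^k * b ≤ (a + b)^(k+1) := by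
  have h : (-2 : ℝ) ≤ b / a := by
    have : -1 ≤ b / a := by
      rw [le_div_iff₀ ha]; linarith
    linarith
  have hb := one_add_mul_le_pow h (k+1)
  have := mul_le_mul_of_nonneg_left hb (le_of_lt (pow_pos ha (k+1)))
  calc a^(k+1) + (k+1) * a^k * b = a^(k+1) * (1 + (k+1) * (b/a)) := by
        field_simp; ring
    _ ≤ a^(k+1) * (1 + b/a)^(k+1) := by push_cast at this ⊢; linarith
    _ = (a + b)^(k+1) := by
        rw [← mul_pow]; congr 1; field_simp

lemma key_ineq (t x : ℝ) (ht : 0 ≤ t) (hx : 0 ≤ x) (c m : ℕ) (hmc : m ≤ c) :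
    ((c:ℝ) - m) * t^(m+1) + ((m:ℝ)+1) * x * t^m
      ≤ ((c:ℝ)+1) * (((c:ℝ) * t + x)/((c:ℝ)+1))^(m+1) := by
  have hc1 : (0:ℝ) < (c:ℝ)+1 := by positivity
  rcases eq_or_lt_of_le ht with h0 | h0
  · -- t = 0
    rcases Nat.eq_zero_or_pos m with hm | hm
    · subst hm; rw [← h0]; simp
      have : ((c:ℝ)+1)*(x/((c:ℝ)+1)) = x := by field_simp
      linarith
    · rw [← h0]
      rw [zero_pow (by omega), zero_pow (by omega)]
      have : (0:ℝ) ≤ (((c:ℝ) * 0 + x)/((c:ℝ)+1))^(m+1) := by positivity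
      nlinarith
  · have heq : t + (x - t)/((c:ℝ)+1) = ((c:ℝ) * t + x)/((c:ℝ)+1) := by
      field_simp; ring
    have hab : 0 ≤ t + (x - t)/((c:ℝ)+1) := by rw [heq]; positivity
    have hb := key_bernoulli t ((x - t)/((c:ℝ)+1)) h0 hab m
    rw [heq] at hb
    have := mul_le_mul_of_nonneg_left hb (le_of_lt hc1)
    have hexp : ((c:ℝ)+1) * (t^(m+1) + (↑m+1) * t^m * ((x - t)/((c:ℝ)+1)))
        = ((c:ℝ) - m) * t^(m+1) + ((m:ℝ)+1) * x * t^m := by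
      field_simp; ring
    push_cast at this
    linarith [this, hexp.symm.le, hexp.le]

lemma maclaurin (x : ℕ → ℝ) (J : Finset ℕ) (hx : ∀ j ∈ J, 0 ≤ x j) (k : ℕ) :
    ∑ I ∈ powersetCard k J, ∏ j ∈ I, x j
      ≤ (J.card.choose k : ℝ) * ((∑ j ∈ J, x j) / (J.card : ℝ))^k := by
  induction J using Finset.induction generalizing k with
  | empty =>
    cases k with
    | zero => simp
    | succ m =>
      rw [Finset.powersetCard_eq_empty.2 (by simp)]
      simp
  | @insert a s ha ih =>
    have hx' : ∀ j ∈ s, 0 ≤ x j := fun j hj => hx j (mem_insert_of_mem hj)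
    have hxa : 0 ≤ x a := hx a (mem_insert_self a s)
    have hs0 : 0 ≤ ∑ j ∈ s, x j := Finset.sum_nonneg hx'
    cases k with
    | zero => simp
    | succ m =>
      have hdis : Disjoint (powersetCard (m+1) s) ((powersetCard m s).image (insert a)) := by
        rw [Finset.disjoint_left]
        intro I hI hI2
        obtain ⟨I', hI', rfl⟩ := Finset.mem_image.1 hI2
        exact ha ((Finset.mem_powersetCard.1 hI).1 (mem_insert_self a I'))
      have hinj : ∀ I ∈ powersetCard m s, ∀ I' ∈ powersetCard m s,
          insert a I = insert a I' → I = I' := by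
        intro I hI I' hI' h
        have haI : a ∉ I := fun hh => ha ((Finset.mem_powersetCard.1 hI).1 hh)
        have haI' : a ∉ I' := fun hh => ha ((Finset.mem_powersetCard.1 hI').1 hh)
        have := congrArg (fun (S : Finset ℕ) => S.erase a) h
        simpa [Finset.erase_insert haI, Finset.erase_insert haI'] using this
      rw [Finset.powersetCard_succ_insert ha, Finset.sum_union hdis, Finset.sum_image hinj]
      have hprod : ∀ I ∈ powersetCard m s, ∏ j ∈ insert a I, x j = x a * ∏ j ∈ I, x j := by
        intro I hI
        have : a ∉ I := fun h => ha ((Finset.mem_powersetCard.1 hI).1 h)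
        rw [Finset.prod_insert this]
      rw [Finset.sum_congr rfl hprod, ← Finset.mul_sum]
      set c := s.card with hc
      set t := (∑ j ∈ s, x j) / (c : ℝ) with htdef
      have ht : 0 ≤ t := by positivity
      have hst : ∑ j ∈ s, x j = (c : ℝ) * t := by
        rcases Nat.eq_zero_or_pos c with h | h
        · have hse : s = ∅ := Finset.card_eq_zero.mp h
          simp [hse, h]
        · rw [htdef]; field_simp
      have hcard : (insert a s).card = c + 1 := Finset.card_insert_of_notMem ha
      rw [hcard, Finset.sum_insert ha, hst]
      push_cast
      rcases le_or_gt m c with hmc | hmc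
      · have h1 := ih hx' (m+1)
        have h2 := ih hx' m
        have hkey := key_ineq t (x a) ht hxa c m hmc
        have hA : ((m:ℝ)+1) * (c.choose (m+1) : ℝ) = ((c:ℝ) - m) * (c.choose m : ℝ) := by
          have h := congrArg (Nat.cast : ℕ → ℝ) (Nat.choose_succ_right_eq c m)
          push_cast [Nat.cast_sub hmc] at h
          linarith
        have hB : ((m:ℝ)+1) * ((c+1).choose (m+1) : ℝ) = ((c:ℝ)+1) * (c.choose m : ℝ) := by
          have h := congrArg (Nat.cast : ℕ → ℝ) (Nat.add_one_mul_choose_eq c m)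
          push_cast at h
          linarith
        have hbpos : (0:ℝ) ≤ (c.choose m : ℝ) := by positivity
        have hmul := mul_le_mul_of_nonneg_left hkey hbpos
        calc (∑ I ∈ powersetCard (m+1) s, ∏ j ∈ I, x j)
              + x a * ∑ I ∈ powersetCard m s, ∏ j ∈ I, x j
            ≤ (c.choose (m+1) : ℝ) * t^(m+1) + x a * ((c.choose m : ℝ) * t^m) := by
              exact add_le_add h1 (mul_le_mul_of_nonneg_left h2 hxa)
          _ ≤ ((c+1).choose (m+1) : ℝ) * ((x a + (c:ℝ)*t)/((c:ℝ)+1))^(m+1) := by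
              refine le_of_mul_le_mul_left ?_ (show (0:ℝ) < (m:ℝ)+1 by positivity)
              have e1 : ((m:ℝ)+1) * ((c.choose (m+1) : ℝ) * t^(m+1)
                  + x a * ((c.choose m : ℝ) * t^m))
                  = (c.choose m : ℝ) * (((c:ℝ) - m) * t^(m+1) + ((m:ℝ)+1) * (x a) * t^m) := by
                linear_combination (t^(m+1)) * hA
              have e2 : ((m:ℝ)+1) * (((c+1).choose (m+1) : ℝ)
                  * ((x a + (c:ℝ)*t)/((c:ℝ)+1))^(m+1))
                  = (c.choose m : ℝ) * (((c:ℝ)+1) * (((c:ℝ)*t + x a)/((c:ℝ)+1))^(m+1)) := by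
                rw [show x a + (c:ℝ)*t = (c:ℝ)*t + x a from by ring]
                linear_combination ((((c:ℝ)*t + x a)/((c:ℝ)+1))^(m+1)) * hB
              rw [e1, e2]
              exact hmul
      · -- m > c : both powersetCards over s are empty
        have e1 : powersetCard (m+1) s = ∅ := Finset.powersetCard_eq_empty.2 (by omega)
        have e2 : powersetCard m s = ∅ := Finset.powersetCard_eq_empty.2 (by omega)
        rw [e1, e2]
        simp only [Finset.sum_empty, mul_zero, add_zero]
        have hbase : (0:ℝ) ≤ (x a + (c:ℝ)*t)/((c:ℝ)+1) :=
          div_nonneg (by nlinarith [mul_nonneg (Nat.cast_nonneg (α := ℝ) c) ht]) (by linarith [Nat.cast_nonneg (α := ℝ) c])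
        exact mul_nonneg (Nat.cast_nonneg _) (pow_nonneg hbase _)


lemma exp_neg_le (uu : ℝ) (h0 : 0 ≤ uu) (h1 : uu ≤ 1) : Real.exp (-uu) ≤ 1 - uu/2 := by
  have h2 : (1:ℝ) + uu ≤ Real.exp uu := by linarith [Real.add_one_le_exp uu]
  have h3 : Real.exp (-uu) * Real.exp uu = 1 := by
    rw [← Real.exp_add]; simp
  have h4 := Real.exp_pos (-uu)
  nlinarith [mul_le_mul_of_nonneg_left h2 (le_of_lt h4)]


/-- For a finite set `J ⊆ ℕ` and a sequence `0 ≤ u_j ≤ (1-δ₀)/2` on `J`, the average over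
all subsets `I ⊆ J` with `|I| = k` of `exp(−∑_{j∈I} u_j)` is at most
`3·exp(−(δ₀ k)/(20|J|) · ∑_{j∈J} u_j)`. -/
theorem avg_exp_subsets_le (J : Finset ℕ) (u : ℕ → ℝ) (δ₀ : ℝ)
    (hδ : δ₀ ∈ Set.Ioo (0 : ℝ) 1)
    (hu : ∀ j ∈ J, 0 ≤ u j ∧ u j ≤ (1 - δ₀) / 2) (k : ℕ) (hk : k ≤ J.card) :
    (1 / (J.card.choose k : ℝ)) *
        ∑ I ∈ Finset.powersetCard k J, Real.exp (-∑ j ∈ I, u j)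
      ≤ 3 * Real.exp (-(δ₀ * k / (20 * J.card)) * ∑ j ∈ J, u j) := by
  obtain ⟨hδ0, hδ1⟩ := hδ
  rcases Nat.eq_zero_or_pos J.card with hn | hn
  · have hJ : J = ∅ := Finset.card_eq_zero.mp hn
    subst hJ
    have hk0 : k = 0 := by simpa using hk
    subst hk0
    simp
  · set n := J.card with hndef
    have hnpos : (0:ℝ) < n := by exact_mod_cast hn
    set S := ∑ j ∈ J, u j with hSdef
    have hS0 : 0 ≤ S := Finset.sum_nonneg fun j hj => (hu j hj).1
    -- rewrite exp of sums as products
    have hsum : ∑ I ∈ Finset.powersetCard k J, Real.exp (-∑ j ∈ I, u j)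
        = ∑ I ∈ Finset.powersetCard k J, ∏ j ∈ I, Real.exp (-u j) := by
      refine Finset.sum_congr rfl fun I hI => ?_
      rw [← Finset.sum_neg_distrib, Real.exp_sum]
    have hmac := maclaurin (fun j => Real.exp (-u j)) J
      (fun j _ => le_of_lt (Real.exp_pos _)) k
    -- bound the mean of exp(-u j)
    have hmean : (∑ j ∈ J, Real.exp (-u j)) / (n:ℝ) ≤ Real.exp (-(S / (2*n))) := by
      have h1 : ∑ j ∈ J, Real.exp (-u j) ≤ ∑ j ∈ J, (1 - u j / 2) := by
        refine Finset.sum_le_sum fun j hj => ?_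
        exact exp_neg_le (u j) (hu j hj).1 (by nlinarith [(hu j hj).2])
      have h2 : ∑ j ∈ J, (1 - u j / 2) = (n:ℝ) - S/2 := by
        rw [Finset.sum_sub_distrib, Finset.sum_const, ← Finset.sum_div]
        simp [hndef, hSdef]
      have h3 : (1:ℝ) + (-(S/(2*n))) ≤ Real.exp (-(S/(2*n))) := by
        linarith [Real.add_one_le_exp (-(S/(2*(n:ℝ))))]
      rw [div_le_iff₀ hnpos]
      have : ((n:ℝ) - S/2) = (1 - S/(2*n)) * n := by field_simp
      nlinarith [h1, h2, h3]
    have hmean0 : 0 ≤ (∑ j ∈ J, Real.exp (-u j)) / (n:ℝ) := by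
      have : 0 ≤ ∑ j ∈ J, Real.exp (-u j) :=
        Finset.sum_nonneg fun j _ => le_of_lt (Real.exp_pos _)
      positivity
    have hpow : ((∑ j ∈ J, Real.exp (-u j)) / (n:ℝ))^k ≤ Real.exp (-(k * S / (2*n))) := by
      calc ((∑ j ∈ J, Real.exp (-u j)) / (n:ℝ))^k
          ≤ (Real.exp (-(S / (2*n))))^k := pow_le_pow_left₀ hmean0 hmean k
        _ = Real.exp (-(k * S / (2*n))) := by
            rw [← Real.exp_nat_mul]; congr 1; ring
    have hchoose : (0:ℝ) < (J.card.choose k : ℝ) := by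
      exact_mod_cast Nat.choose_pos hk
    have step1 : (1 / (J.card.choose k : ℝ)) *
        ∑ I ∈ Finset.powersetCard k J, Real.exp (-∑ j ∈ I, u j)
        ≤ ((∑ j ∈ J, Real.exp (-u j)) / (n:ℝ))^k := by
      rw [hsum, div_mul_eq_mul_div, one_mul, div_le_iff₀ hchoose]
      calc ∑ I ∈ Finset.powersetCard k J, ∏ j ∈ I, Real.exp (-u j)
          ≤ (J.card.choose k : ℝ) * ((∑ j ∈ J, Real.exp (-u j)) / (J.card : ℝ))^k := hmac
        _ = ((∑ j ∈ J, Real.exp (-u j)) / (n:ℝ))^k * (J.card.choose k : ℝ) := by ring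
    have step2 : Real.exp (-(k * S / (2*n))) ≤ 3 * Real.exp (-(δ₀ * k / (20 * n)) * S) := by
      have hle : -(k * S / (2*n)) ≤ -(δ₀ * k / (20 * n)) * S := by
        have hkS : 0 ≤ (k:ℝ) * S := by positivity
        rw [neg_mul, neg_le_neg_iff, div_mul_eq_mul_div,
          div_le_div_iff₀ (by positivity) (by positivity)]
        nlinarith [mul_nonneg (le_of_lt hnpos) hkS]
      calc Real.exp (-(k * S / (2*n))) ≤ Real.exp (-(δ₀ * k / (20 * n)) * S) :=
            Real.exp_le_exp.2 hle
        _ ≤ 3 * Real.exp (-(δ₀ * k / (20 * n)) * S) := by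
            nlinarith [Real.exp_pos (-(δ₀ * k / (20 * n)) * S)]
    calc (1 / (J.card.choose k : ℝ)) *
        ∑ I ∈ Finset.powersetCard k J, Real.exp (-∑ j ∈ I, u j)
        ≤ ((∑ j ∈ J, Real.exp (-u j)) / (n:ℝ))^k := step1
      _ ≤ Real.exp (-(k * S / (2*n))) := hpow
      _ ≤ 3 * Real.exp (-(δ₀ * k / (20 * n)) * S) := step2
end

section
/- For every ε ∈ {0,1} and every real x ≥ 0, the sum over all nonnegative integers n with n + ε a power of 2 (i.e., n + ε ∈ {2^m : m ∈ ℕ, m ≥ 1}) of min(nx, (nx)^{-1})² is at most 10, with the convention that min(0·x, (0·x)^{-1}) is interpreted so the n = 0 term (when ε allows it) contributes at most its minimum value. -/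
open Finset

-- key pointwise estimate
lemma key_est (s t : ℝ) (hs : 0 < s) (hst : s ≤ t) (hts : t ≤ 2 * s) :
    (min t t⁻¹) ^ 2 ≤ 6 * (1 / (1 + s ^ 2) - 1 / (1 + (2 * s) ^ 2)) := by
  have ht : 0 < t := lt_of_lt_of_le hs hst
  have hmin : min t t⁻¹ ≤ min (2 * s) s⁻¹ := by
    refine le_min ((min_le_left _ _).trans hts) ((min_le_right _ _).trans ?_)
    exact inv_anti₀ hs hst
  have hnn' : 0 ≤ min t t⁻¹ := le_min ht.le (by positivity)
  have hsq : (min t t⁻¹) ^ 2 ≤ (min (2 * s) s⁻¹) ^ 2 := pow_le_pow_left₀ hnn' hmin 2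
  refine hsq.trans ?_
  have d1 : (0:ℝ) < 1 + s ^ 2 := by positivity
  have d2 : (0:ℝ) < 1 + (2 * s) ^ 2 := by positivity
  have hinv : s⁻¹ * s = 1 := inv_mul_cancel₀ hs.ne'
  rcases le_total (2 * s) s⁻¹ with h | h
  · rw [min_eq_left h, div_sub_div _ _ d1.ne' d2.ne', ← mul_div_assoc,
      le_div_iff₀ (by positivity)]
    have h1 : 2 * s * s ≤ 1 := by nlinarith [mul_le_mul_of_nonneg_right h hs.le]
    nlinarith [sq_nonneg s, mul_nonneg (sq_nonneg s) (sq_nonneg s)]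
  · rw [min_eq_right h, div_sub_div _ _ d1.ne' d2.ne', ← mul_div_assoc,
      le_div_iff₀ (by positivity)]
    have h1 : 1 ≤ 2 * s * s := by nlinarith [mul_le_mul_of_nonneg_right h hs.le]
    have e1 : s⁻¹ ^ 2 * s ^ 2 = 1 := by
      field_simp
    have e2 : s⁻¹ ^ 2 * s ^ 4 = s ^ 2 := by
      field_simp
    have hsq2 : s⁻¹ ^ 2 ≤ (2 * s) ^ 2 :=
      pow_le_pow_left₀ (inv_pos.mpr hs).le h 2
    nlinarith [e1, e2, hsq2, h1]

/-- For `ε ∈ {0,1}` and `x ≥ 0`, the sum over nonnegative integers `n` with `n + ε` a power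
of two (i.e. `n + ε = 2^m` for some `m ≥ 1`) of `min(nx, (nx)⁻¹)²` is at most `10`.
(For `n x = 0` the term is `min(0, 0⁻¹)² = 0` by Lean's convention `0⁻¹ = 0`.)
We state this for all finite subsets of the index set, which is equivalent since the terms
are nonnegative. -/
theorem sum_dyadic_min_sq_le (ε : ℕ) (hε : ε ≤ 1) (x : ℝ) (hx : 0 ≤ x)
    (F : Finset ℕ) (hF : ∀ n ∈ F, ∃ m : ℕ, 1 ≤ m ∧ n + ε = 2 ^ m) :
    ∑ n ∈ F, (min ((n : ℝ) * x) (((n : ℝ) * x)⁻¹)) ^ 2 ≤ 10 := by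
  rcases eq_or_lt_of_le hx with h0 | hx'
  · simp [← h0]
  -- x > 0
  set f : ℕ → ℝ := fun k => 1 / (1 + ((2:ℝ) ^ k * x) ^ 2) with hf
  classical
  set kf : ℕ → ℕ := fun n => if h : ∃ m : ℕ, 1 ≤ m ∧ n + ε = 2 ^ m then h.choose - 1 else 0
    with hkf
  have hspec : ∀ n ∈ F, n + ε = 2 ^ (kf n + 1) := by
    intro n hn
    obtain ⟨m, hm1, hm2⟩ := hF n hn
    have h : ∃ m : ℕ, 1 ≤ m ∧ n + ε = 2 ^ m := ⟨m, hm1, hm2⟩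
    simp only [hkf, dif_pos h]
    have hc := h.choose_spec
    rw [Nat.sub_add_cancel hc.1]
    exact hc.2
  have step : ∀ n ∈ F, (min ((n : ℝ) * x) (((n : ℝ) * x)⁻¹)) ^ 2
      ≤ 6 * (f (kf n) - f (kf n + 1)) := by
    intro n hn
    have hne := hspec n hn
    set k := kf n with hk
    have hp : 2 ^ k + 1 ≤ 2 ^ (k + 1) := by
      rw [pow_succ]
      have : 1 ≤ 2 ^ k := Nat.one_le_two_pow
      omega
    have hlow : 2 ^ k ≤ n := by omega
    have hhigh : n ≤ 2 ^ (k + 1) := by omega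
    have hlowR : ((2:ℝ) ^ k) ≤ (n : ℝ) := by exact_mod_cast hlow
    have hhighR : (n : ℝ) ≤ (2:ℝ) ^ (k + 1) := by exact_mod_cast hhigh
    have hs : (0:ℝ) < (2:ℝ) ^ k * x := by positivity
    have h1 : (2:ℝ) ^ k * x ≤ (n : ℝ) * x := mul_le_mul_of_nonneg_right hlowR hx
    have h2 : (n : ℝ) * x ≤ 2 * ((2:ℝ) ^ k * x) := by
      have : (n : ℝ) * x ≤ (2:ℝ) ^ (k + 1) * x := mul_le_mul_of_nonneg_right hhighR hx
      calc (n:ℝ) * x ≤ (2:ℝ) ^ (k+1) * x := this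
        _ = 2 * ((2:ℝ) ^ k * x) := by ring
    have := key_est ((2:ℝ) ^ k * x) ((n : ℝ) * x) hs h1 h2
    refine this.trans (le_of_eq ?_)
    simp only [hf]
    congr 2
    rw [pow_succ]
    ring
  have hnnf : ∀ k : ℕ, 0 ≤ 6 * (f k - f (k + 1)) := by
    intro k
    have h1 : ((2:ℝ) ^ k * x) ^ 2 ≤ ((2:ℝ) ^ (k+1) * x) ^ 2 := by
      have : (2:ℝ) ^ k * x ≤ (2:ℝ) ^ (k+1) * x := by
        apply mul_le_mul_of_nonneg_right _ hx
        exact pow_le_pow_right₀ one_le_two (Nat.le_succ k)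
      exact pow_le_pow_left₀ (by positivity) this 2
    have : f (k+1) ≤ f k := by
      simp only [hf]
      apply one_div_le_one_div_of_le (by positivity)
      linarith
    linarith
  set N : ℕ := (F.image kf).sup id + 1 with hN
  calc ∑ n ∈ F, (min ((n : ℝ) * x) (((n : ℝ) * x)⁻¹)) ^ 2
      ≤ ∑ n ∈ F, 6 * (f (kf n) - f (kf n + 1)) := Finset.sum_le_sum step
    _ = ∑ k ∈ F.image kf, 6 * (f k - f (k + 1)) := by
        rw [Finset.sum_image]
        intro a ha b hb hab
        have h1 := hspec a ha
        have h2 := hspec b hb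
        rw [hab] at h1
        omega
    _ ≤ ∑ k ∈ Finset.range N, 6 * (f k - f (k + 1)) := by
        apply Finset.sum_le_sum_of_subset_of_nonneg
        · intro k hk
          rw [Finset.mem_range, hN]
          have := Finset.le_sup (f := id) hk
          simp only [id] at this
          omega
        · intro k _ _
          exact hnnf k
    _ = 6 * (f 0 - f N) := by
        rw [← Finset.mul_sum, Finset.sum_range_sub' f N]
    _ ≤ 10 := by
        have h1 : f 0 ≤ 1 := by
          simp only [hf]
          rw [div_le_one (by positivity)]
          nlinarith [sq_nonneg x]
        have h2 : 0 ≤ f N := by positivity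
        linarith
end

section
/- Any half-open interval (n, k] with 0 ≤ n < k ≤ 2^s and n, k even can be decomposed into a disjoint union of dyadic intervals, each of the form ((j−1)·2^i, j·2^i] with 1 ≤ i ≤ s and 1 ≤ j ≤ 2^{s−i}, such that for each length 2^i at most two intervals of that length appear in the decomposition. -/
/-!
Peel off the odd endpoint, if any, at each end of `(a, b]` as a singleton, an interval of
level `0`; what remains is `(2a', 2b']`. Doubling a decomposition of `(a', b']` raises every
level by one, so by induction on `s` every level is used at most twice, level `0` only by the
two peeled points. For even `n < k` the doubled decomposition of `(n/2, k/2]` already has all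
levels `≥ 1`.
-/

open Finset Function

def dyadicInterval (p : ℕ × ℕ) : Finset ℕ :=
  Ioc ((p.2 - 1) * 2 ^ p.1) (p.2 * 2 ^ p.1)

lemma mem_Ioc_two_mul_iff {c d x : ℕ} : x ∈ Ioc (2 * c) (2 * d) ↔ (x + 1) / 2 ∈ Ioc c d := by
  simp only [mem_Ioc]
  omega

lemma mem_dyadicInterval_succ_iff {i j x : ℕ} :
    x ∈ dyadicInterval (i + 1, j) ↔ (x + 1) / 2 ∈ dyadicInterval (i, j) := by
  rw [dyadicInterval, dyadicInterval, pow_succ', mul_left_comm, mul_left_comm j]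
  exact mem_Ioc_two_mul_iff

lemma dyadicInterval_zero {j : ℕ} (hj : 1 ≤ j) : dyadicInterval (0, j) = {j} := by
  ext x
  simp only [dyadicInterval, pow_zero, mul_one, mem_Ioc, mem_singleton]
  omega

def raiseLevel : ℕ × ℕ ↪ ℕ × ℕ :=
  ⟨fun p => (p.1 + 1, p.2), fun p q h => by simpa [Prod.ext_iff] using h⟩

@[simp]
lemma raiseLevel_apply (p : ℕ × ℕ) : raiseLevel p = (p.1 + 1, p.2) := rfl

lemma filter_map_raiseLevel_fst_eq_zero (S : Finset (ℕ × ℕ)) :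
    (S.map raiseLevel).filter (·.1 = 0) = ∅ := by
  simp [filter_map]

lemma card_filter_map_raiseLevel_fst_eq_succ (S : Finset (ℕ × ℕ)) (i : ℕ) :
    #((S.map raiseLevel).filter (·.1 = i + 1)) = #(S.filter (·.1 = i)) := by
  simp [filter_map, comp_def]

structure IsDyadicPartition (s : ℕ) (X : Finset ℕ) (S : Finset (ℕ × ℕ)) : Prop where
  bounds : ∀ p ∈ S, p.1 ≤ s ∧ 1 ≤ p.2 ∧ p.2 ≤ 2 ^ (s - p.1)
  eq_biUnion : X = S.biUnion dyadicInterval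
  pairwiseDisjoint : (S : Set (ℕ × ℕ)).PairwiseDisjoint dyadicInterval

namespace IsDyadicPartition

variable {s : ℕ} {X Y : Finset ℕ} {S T : Finset (ℕ × ℕ)}

lemma union (hS : IsDyadicPartition s X S) (hT : IsDyadicPartition s Y T) (hXY : Disjoint X Y) :
    IsDyadicPartition s (X ∪ Y) (S ∪ T) where
  bounds p hp := (mem_union.mp hp).elim (hS.bounds p) (hT.bounds p)
  eq_biUnion := by rw [union_biUnion, ← hS.eq_biUnion, ← hT.eq_biUnion]
  pairwiseDisjoint := by
    rw [coe_union, Set.pairwiseDisjoint_union]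
    refine ⟨hS.pairwiseDisjoint, hT.pairwiseDisjoint, fun p hp q hq _ => hXY.mono ?_ ?_⟩
    · exact hS.eq_biUnion ▸ subset_biUnion_of_mem _ hp
    · exact hT.eq_biUnion ▸ subset_biUnion_of_mem _ hq

lemma map_raiseLevel {a b : ℕ} (hS : IsDyadicPartition s (Ioc a b) S) :
    IsDyadicPartition (s + 1) (Ioc (2 * a) (2 * b)) (S.map raiseLevel) where
  bounds p hp := by
    obtain ⟨q, hq, rfl⟩ := mem_map.mp hp
    simpa using hS.bounds q hq
  eq_biUnion := by
    ext x
    simp only [mem_Ioc_two_mul_iff, hS.eq_biUnion, mem_biUnion, mem_map, exists_exists_and_eq_and,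
      raiseLevel_apply, mem_dyadicInterval_succ_iff]
  pairwiseDisjoint := by
    rintro _ hp' _ hq' hpq
    obtain ⟨p, hp, rfl⟩ := mem_map.mp hp'
    obtain ⟨q, hq, rfl⟩ := mem_map.mp hq'
    have hdisj := hS.pairwiseDisjoint hp hq fun h => hpq (congrArg raiseLevel h)
    simp only [onFun, raiseLevel_apply]
    exact disjoint_left.mpr fun x hxp hxq => disjoint_left.mp hdisj
      (mem_dyadicInterval_succ_iff.mp hxp) (mem_dyadicInterval_succ_iff.mp hxq)

end IsDyadicPartition

lemma isDyadicPartition_singletons {s : ℕ} {Y : Finset ℕ} (hY : ∀ j ∈ Y, 1 ≤ j ∧ j ≤ 2 ^ s) :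
    IsDyadicPartition s Y (Y.map (Embedding.sectR 0 ℕ)) where
  bounds p hp := by
    obtain ⟨j, hj, rfl⟩ := mem_map.mp hp
    simpa using hY j hj
  eq_biUnion := by
    ext x
    simp only [mem_biUnion, mem_map, Embedding.sectR_apply, exists_exists_and_eq_and]
    exact ⟨fun hx => ⟨x, hx, by simp [dyadicInterval_zero (hY x hx).1]⟩,
      fun ⟨j, hj, hx⟩ => by rw [dyadicInterval_zero (hY j hj).1, mem_singleton] at hx; rwa [hx]⟩
  pairwiseDisjoint := by
    rintro _ hp _ hq hpq
    obtain ⟨j, hj, rfl⟩ := mem_map.mp hp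
    obtain ⟨j', hj', rfl⟩ := mem_map.mp hq
    rw [Embedding.sectR_apply, Embedding.sectR_apply, ne_eq, Prod.mk.injEq] at hpq
    simp only [Embedding.sectR_apply, onFun]
    rw [dyadicInterval_zero (hY j hj).1, dyadicInterval_zero (hY j' hj').1]
    exact disjoint_singleton.mpr fun h => hpq ⟨rfl, h⟩

lemma exists_isDyadicPartition_Ioc_of_le_add_two {s a b : ℕ} (hab : b ≤ a + 2) (hb : b ≤ 2 ^ s) :
    ∃ S, IsDyadicPartition s (Ioc a b) S ∧ ∀ i, #(S.filter (·.1 = i)) ≤ 2 := by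
  refine ⟨_, isDyadicPartition_singletons fun j hj => ?_, fun i => ?_⟩
  · rw [mem_Ioc] at hj
    omega
  · calc #(((Ioc a b).map (Embedding.sectR 0 ℕ)).filter (·.1 = i)) ≤ #(Ioc a b) :=
          (card_filter_le _ _).trans (card_map _).le
      _ ≤ 2 := by rw [Nat.card_Ioc]; omega

theorem exists_isDyadicPartition_Ioc (s a b : ℕ) (hb : b ≤ 2 ^ s) :
    ∃ S, IsDyadicPartition s (Ioc a b) S ∧ ∀ i, #(S.filter (·.1 = i)) ≤ 2 := by
  induction s generalizing a b with
  | zero => exact exists_isDyadicPartition_Ioc_of_le_add_two (by rw [pow_zero] at hb; omega) hb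
  | succ s ih =>
    rcases le_or_gt b a with hba | hab
    · exact exists_isDyadicPartition_Ioc_of_le_add_two (by omega) hb
    set a' := (a + 1) / 2
    set b' := b / 2
    obtain ⟨S, hS, hcount⟩ := ih a' b' (by rw [pow_succ] at hb; omega)
    have hsplit : Ioc a b = Ioc (2 * a') (2 * b') ∪ (Ioc a (2 * a') ∪ Ioc (2 * b') b) := by
      ext x
      simp only [mem_union, mem_Ioc]
      omega
    have hdisj : Disjoint (Ioc (2 * a') (2 * b')) (Ioc a (2 * a') ∪ Ioc (2 * b') b) := by
      rw [disjoint_left]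
      simp only [mem_union, mem_Ioc]
      omega
    set E := (Ioc a (2 * a') ∪ Ioc (2 * b') b).map (Embedding.sectR 0 ℕ)
    have hE : IsDyadicPartition (s + 1) (Ioc a (2 * a') ∪ Ioc (2 * b') b) E :=
      isDyadicPartition_singletons fun j hj => by
        simp only [mem_union, mem_Ioc] at hj
        rw [pow_succ] at hb
        omega
    refine ⟨S.map raiseLevel ∪ E, hsplit ▸ hS.map_raiseLevel.union hE hdisj, ?_⟩
    rintro (_ | i) <;> rw [filter_union] <;> refine (card_union_le _ _).trans ?_
    · rw [filter_map_raiseLevel_fst_eq_zero, card_empty, zero_add]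
      calc #(E.filter (·.1 = 0)) ≤ #(Ioc a (2 * a') ∪ Ioc (2 * b') b) :=
            (card_filter_le _ _).trans (card_map _).le
        _ ≤ #(Ioc a (2 * a')) + #(Ioc (2 * b') b) := card_union_le _ _
        _ ≤ 2 := by simp only [Nat.card_Ioc]; omega
    · have hE_succ : E.filter (·.1 = i + 1) = ∅ := by simp [E, filter_map]
      rw [card_filter_map_raiseLevel_fst_eq_succ, hE_succ, card_empty, add_zero]
      exact hcount i

/-- Any interval `(n, k]` with `0 ≤ n < k ≤ 2^s` and `n, k` even can be decomposed into a
disjoint union of dyadic intervals `((j−1)·2^i, j·2^i]` with `1 ≤ i ≤ s`,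
`1 ≤ j ≤ 2^{s−i}`, such that each length `2^i` appears at most twice. -/
theorem dyadic_decomposition (s n k : ℕ) (hn : Even n) (hk : Even k)
    (hnk : n < k) (hks : k ≤ 2 ^ s) :
    ∃ S : Finset (ℕ × ℕ),
      (∀ p ∈ S, 1 ≤ p.1 ∧ p.1 ≤ s ∧ 1 ≤ p.2 ∧ p.2 ≤ 2 ^ (s - p.1)) ∧
      (Finset.Ioc n k = S.biUnion fun p => Finset.Ioc ((p.2 - 1) * 2 ^ p.1) (p.2 * 2 ^ p.1)) ∧
      (∀ p ∈ S, ∀ q ∈ S, p ≠ q →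
        Disjoint (Finset.Ioc ((p.2 - 1) * 2 ^ p.1) (p.2 * 2 ^ p.1))
          (Finset.Ioc ((q.2 - 1) * 2 ^ q.1) (q.2 * 2 ^ q.1))) ∧
      (∀ i : ℕ, (S.filter fun p => p.1 = i).card ≤ 2) := by
  obtain ⟨a, rfl⟩ := even_iff_two_dvd.mp hn
  obtain ⟨b, rfl⟩ := even_iff_two_dvd.mp hk
  obtain ⟨s, rfl⟩ : ∃ t, s = t + 1 := Nat.exists_eq_add_one.mpr <| Nat.pos_of_ne_zero <| by
    rintro rfl
    omega
  obtain ⟨S, hS, hcount⟩ := exists_isDyadicPartition_Ioc s a b (by rw [pow_succ] at hks; omega)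
  have hS' := hS.map_raiseLevel
  refine ⟨S.map raiseLevel, fun p hp => ?_, hS'.eq_biUnion,
    fun p hp q hq => hS'.pairwiseDisjoint hp hq, ?_⟩
  · obtain ⟨q, -, rfl⟩ := mem_map.mp hp
    exact ⟨Nat.le_add_left 1 q.1, hS'.bounds _ hp⟩
  · rintro (_ | i)
    · rw [filter_map_raiseLevel_fst_eq_zero, card_empty]
      exact Nat.zero_le 2
    · exact (card_filter_map_raiseLevel_fst_eq_succ S i).trans_le (hcount i)
end

section
/- For every sequence of complex numbers (a_n : n ∈ ℕ₀), every s ∈ ℕ₀ and every m ∈ ℕ₀ with m ≤ 2^s, one has sup over even n with 0 ≤ n ≤ m of |a_n| ≤ √2 · Σ_{i=1}^{s} ( Σ_{1 ≤ j ≤ 2^{s−i}} | Σ_{k ∈ ((j−1)2^i, j2^i], k even, k ≤ m} (a_k − a_{k−2}) |² )^{1/2} + |a_0|. -/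
open Finset

private noncomputable def Td (a : ℕ → ℂ) (m i j : ℕ) : ℂ :=
  ∑ k ∈ (Finset.Ioc ((j - 1) * 2 ^ i) (j * 2 ^ i)).filter (fun k => Even k ∧ k ≤ m),
    (a k - a (k - 2))

private noncomputable def cd (a : ℕ → ℂ) (m s i : ℕ) : ℝ :=
  Real.sqrt (∑ j ∈ Finset.Icc 1 (2 ^ (s - i)), (‖Td a m i j‖) ^ 2)

private lemma cd_nonneg (a : ℕ → ℂ) (m s i : ℕ) : 0 ≤ cd a m s i := Real.sqrt_nonneg _

private lemma tel (a : ℕ → ℂ) (m : ℕ) : ∀ t u, u % 2 = 0 → u + 2 * t ≤ m →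
    ∑ k ∈ (Finset.Ioc u (u + 2 * t)).filter (fun k => Even k ∧ k ≤ m), (a k - a (k - 2))
      = a (u + 2 * t) - a u := by
  intro t
  induction t with
  | zero => intro u hu hm; simp
  | succ t ih =>
    intro u hu hm
    have h1 : Finset.Ioc u (u + 2 * (t + 1))
        = Finset.Ioc u (u + 2 * t) ∪ Finset.Ioc (u + 2 * t) (u + 2 * (t + 1)) := by
      rw [Finset.Ioc_union_Ioc_eq_Ioc] <;> omega
    rw [h1, Finset.filter_union, Finset.sum_union]
    · have h2 : (Finset.Ioc (u + 2 * t) (u + 2 * (t + 1))).filter (fun k => Even k ∧ k ≤ m)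
          = {u + 2 * t + 2} := by
        ext k
        simp only [Finset.mem_filter, Finset.mem_Ioc, Finset.mem_singleton, Nat.even_iff]
        omega
      rw [ih u hu (by omega), h2, Finset.sum_singleton]
      have e : u + 2 * (t + 1) = u + 2 * t + 2 := by ring
      rw [e]
      have e2 : u + 2 * t + 2 - 2 = u + 2 * t := by omega
      rw [e2]
      ring
    · rw [Finset.disjoint_left]
      intro k hk hk'
      simp only [Finset.mem_filter, Finset.mem_Ioc] at hk hk'
      omega

private lemma block (a : ℕ → ℂ) (m : ℕ) (i j : ℕ) (hi : 1 ≤ i) (hj : 1 ≤ j)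
    (hjm : j * 2 ^ i ≤ m) :
    Td a m i j = a (j * 2 ^ i) - a ((j - 1) * 2 ^ i) := by
  have hpow : 2 * 2 ^ (i - 1) = 2 ^ i := by
    rw [← pow_succ']
    congr 1
    omega
  have h2 : (j - 1) * 2 ^ i + 2 * 2 ^ (i - 1) = j * 2 ^ i := by
    rw [hpow]
    have : j - 1 + 1 = j := by omega
    calc (j - 1) * 2 ^ i + 2 ^ i = (j - 1 + 1) * 2 ^ i := by ring
    _ = j * 2 ^ i := by rw [this]
  have hdvd : 2 ∣ (j - 1) * 2 ^ i := Dvd.dvd.mul_left (dvd_pow_self 2 (by omega)) _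
  have hu : ((j - 1) * 2 ^ i) % 2 = 0 := by omega
  have := tel a m (2 ^ (i - 1)) ((j - 1) * 2 ^ i) hu (by omega)
  rw [h2] at this
  exact this

private lemma Td_le_cd (a : ℕ → ℂ) (m s i j : ℕ) (hj : j ∈ Finset.Icc 1 (2 ^ (s - i))) :
    ‖Td a m i j‖ ≤ cd a m s i := by
  rw [cd, ← Real.sqrt_sq (norm_nonneg _)]
  apply Real.sqrt_le_sqrt
  exact Finset.single_le_sum (f := fun j => (‖Td a m i j‖) ^ 2)
    (fun j _ => sq_nonneg _) hj

private lemma key (a : ℕ → ℂ) (m s : ℕ) : ∀ s' q n, Even n → n ≤ m →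
    q * 2 ^ s' ≤ n → n < (q + 1) * 2 ^ s' → (q + 1) * 2 ^ s' ≤ 2 ^ s →
    ‖a n - a (q * 2 ^ s')‖ ≤ ∑ i ∈ Finset.Ico 1 s', cd a m s i := by
  intro s'
  induction s' with
  | zero =>
    intro q n _ _ h1 h2 _
    have : n = q := by simp only [pow_zero, mul_one] at h1 h2; omega
    subst this
    simp
  | succ s' ih =>
    intro q n hn hnm h1 h2 h3
    have e1 : q * 2 ^ (s' + 1) = (2 * q) * 2 ^ s' := by rw [pow_succ]; ring
    have e2 : (q + 1) * 2 ^ (s' + 1) = (2 * q + 2) * 2 ^ s' := by rw [pow_succ]; ring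
    have hsub : ∑ i ∈ Finset.Ico 1 s', cd a m s i ≤ ∑ i ∈ Finset.Ico 1 (s' + 1), cd a m s i :=
      Finset.sum_le_sum_of_subset_of_nonneg
        (Finset.Ico_subset_Ico le_rfl (Nat.le_succ _)) (fun i _ _ => cd_nonneg a m s i)
    by_cases hc : n < (2 * q + 1) * 2 ^ s'
    · have h3' : (2 * q + 1) * 2 ^ s' ≤ 2 ^ s := by
        have hstep : (2 * q + 1) * 2 ^ s' ≤ (2 * q + 2) * 2 ^ s' :=
          Nat.mul_le_mul_right _ (by omega)
        refine le_trans hstep ?_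
        rw [← e2]; exact h3
      have := ih (2 * q) n hn hnm (by rw [← e1]; exact h1) (by simpa using hc) h3'
      rw [e1]
      exact le_trans this hsub
    · push_neg at hc
      -- n ≥ mid = (2q+1) * 2^s'
      have hs' : 1 ≤ s' := by
        by_contra h
        have hs0 : s' = 0 := by omega
        subst hs0
        simp only [pow_zero, mul_one] at hc h2 e2
        rw [e2] at h2
        have : n = 2 * q + 1 := by omega
        rw [Nat.even_iff] at hn
        omega
      have hmid : (2 * q + 2) * 2 ^ s' ≤ 2 ^ s := by rw [← e2]; exact h3
      have hss : s' + 1 ≤ s := by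
        have h1' : 2 ^ (s' + 1) ≤ 2 ^ s := by
          calc 2 ^ (s' + 1) = 2 * 2 ^ s' := by rw [pow_succ]; ring
          _ ≤ (2 * q + 2) * 2 ^ s' := Nat.mul_le_mul_right _ (by omega)
          _ ≤ 2 ^ s := hmid
        exact (Nat.pow_le_pow_iff_right (by norm_num)).mp h1'
      have hjle : 2 * q + 1 ≤ 2 ^ (s - s') := by
        have hsp : 2 ^ s = 2 ^ (s - s') * 2 ^ s' := by
          rw [← pow_add]
          congr 1
          omega
        have : (2 * q + 2) * 2 ^ s' ≤ 2 ^ (s - s') * 2 ^ s' := by rw [← hsp]; exact hmid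
        have := Nat.le_of_mul_le_mul_right this (by positivity)
        omega
      have hb : Td a m s' (2 * q + 1) = a ((2 * q + 1) * 2 ^ s') - a ((2 * q) * 2 ^ s') := by
        have := block a m s' (2 * q + 1) hs' (by omega) (le_trans hc hnm)
        simpa using this
      have hbound : ‖a ((2 * q + 1) * 2 ^ s') - a ((2 * q) * 2 ^ s')‖ ≤ cd a m s s' := by
        rw [← hb]
        exact Td_le_cd a m s s' (2 * q + 1) (Finset.mem_Icc.mpr ⟨by omega, hjle⟩)
      have hrest : ‖a n - a ((2 * q + 1) * 2 ^ s')‖ ≤ ∑ i ∈ Finset.Ico 1 s', cd a m s i := by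
        refine ih (2 * q + 1) n hn hnm hc ?_ ?_
        · have : (2 * q + 1 + 1) * 2 ^ s' = (2 * q + 2) * 2 ^ s' := by ring
          rw [this, ← e2]; exact h2
        · have : (2 * q + 1 + 1) * 2 ^ s' = (2 * q + 2) * 2 ^ s' := by ring
          rw [this]; exact hmid
      have htri : ‖a n - a (q * 2 ^ (s' + 1))‖
          ≤ ‖a n - a ((2 * q + 1) * 2 ^ s')‖
            + ‖a ((2 * q + 1) * 2 ^ s') - a ((2 * q) * 2 ^ s')‖ := by
        rw [e1]
        exact norm_sub_le_norm_sub_add_norm_sub _ _ _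
      calc ‖a n - a (q * 2 ^ (s' + 1))‖
          ≤ ‖a n - a ((2 * q + 1) * 2 ^ s')‖
            + ‖a ((2 * q + 1) * 2 ^ s') - a ((2 * q) * 2 ^ s')‖ := htri
        _ ≤ (∑ i ∈ Finset.Ico 1 s', cd a m s i) + cd a m s s' := add_le_add hrest hbound
        _ = ∑ i ∈ Finset.Ico 1 (s' + 1), cd a m s i := (Finset.sum_Ico_succ_top hs' _).symm

/-- One-parameter Rademacher–Menshov type inequality: for a sequence of complex numbers
`(a_n)`, `s ∈ ℕ₀`, `m ≤ 2^s`, and any even `n ≤ m`,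
`|a_n| ≤ √2 · ∑_{i=1}^{s} (∑_{1 ≤ j ≤ 2^{s−i}}
  |∑_{k ∈ ((j−1)2^i, j2^i], k even, k ≤ m} (a_k − a_{k−2})|²)^{1/2} + |a_0|`. -/
theorem rademacher_menshov_one_param (a : ℕ → ℂ) (s m : ℕ) (hm : m ≤ 2 ^ s)
    (n : ℕ) (hn : n ≤ m) (hne : Even n) :
    ‖a n‖ ≤
      Real.sqrt 2 *
          ∑ i ∈ Finset.Icc 1 s,
            Real.sqrt (∑ j ∈ Finset.Icc 1 (2 ^ (s - i)),
              (‖∑ k ∈ (Finset.Ioc ((j - 1) * 2 ^ i) (j * 2 ^ i)).filter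
                  (fun k => Even k ∧ k ≤ m), (a k - a (k - 2))‖) ^ 2)
        + ‖a 0‖ := by
  have hrhs : ∑ i ∈ Finset.Icc 1 s,
      Real.sqrt (∑ j ∈ Finset.Icc 1 (2 ^ (s - i)),
        (‖∑ k ∈ (Finset.Ioc ((j - 1) * 2 ^ i) (j * 2 ^ i)).filter
            (fun k => Even k ∧ k ≤ m), (a k - a (k - 2))‖) ^ 2)
      = ∑ i ∈ Finset.Icc 1 s, cd a m s i := rfl
  rw [hrhs]
  set S := ∑ i ∈ Finset.Icc 1 s, cd a m s i with hS
  have hSnonneg : 0 ≤ S := Finset.sum_nonneg fun i _ => cd_nonneg a m s i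
  have hmain : ‖a n - a 0‖ ≤ S := by
    rcases Nat.lt_or_ge n (2 ^ s) with hlt | hge
    · -- n < 2^s : use key with q = 0
      have := key a m s s 0 n hne hn (by simp) (by simpa using hlt) (by simp)
      simp only [zero_mul] at this
      refine le_trans this ?_
      exact Finset.sum_le_sum_of_subset_of_nonneg
        (by intro i hi; simp only [Finset.mem_Ico, Finset.mem_Icc] at hi ⊢; omega)
        (fun i _ _ => cd_nonneg a m s i)
    · -- n = 2^s
      have hn2 : n = 2 ^ s := by omega
      rcases Nat.eq_zero_or_pos s with hs0 | hs0
      · subst hs0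
        simp only [pow_zero] at hn2
        rw [Nat.even_iff] at hne
        omega
      · have hb : Td a m s 1 = a (1 * 2 ^ s) - a ((1 - 1) * 2 ^ s) :=
          block a m s 1 hs0 le_rfl (by omega)
        simp only [one_mul, Nat.sub_self, zero_mul] at hb
        have hbd : ‖a (2 ^ s) - a 0‖ ≤ cd a m s s := by
          rw [← hb]
          exact Td_le_cd a m s s 1 (Finset.mem_Icc.mpr ⟨le_rfl, by simp⟩)
        rw [hn2]
        refine le_trans hbd ?_
        exact Finset.single_le_sum (f := fun i => cd a m s i)
          (fun i _ => cd_nonneg a m s i) (Finset.mem_Icc.mpr ⟨hs0, le_rfl⟩)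
  have h1 : ‖a n‖ ≤ S + ‖a 0‖ := by
    calc ‖a n‖ = ‖(a n - a 0) + a 0‖ := by ring_nf
      _ ≤ ‖a n - a 0‖ + ‖a 0‖ := norm_add_le _ _
      _ ≤ S + ‖a 0‖ := by linarith
  have h2 : S ≤ Real.sqrt 2 * S := by
    nlinarith [Real.sq_sqrt (by norm_num : (2:ℝ) ≥ 0), Real.sqrt_nonneg 2, hSnonneg]
  linarith
end

section
/- For K, d ∈ ℕ, n̄ = (n₁,…,n_K) ∈ ℕ₀^K with n₁+⋯+n_K ≤ d, and ξ ∈ (ℝ/ℤ)^d, the multiplier β_{n̄}(ξ) = (1/|D_{n̄}|) Σ_{x ∈ D_{n̄}} e^{−2πi x·ξ} equals the average, over all pairwise disjoint subsets I₁,…,I_K ⊆ {1,…,d} with |I_j| = n_j, of ∏_{k=1}^{K} ∏_{i ∈ I_k} cos(2kπξ_i). -/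
open Finset Real

/-- `D_{n̄}`: lattice points `x ∈ {−K,…,K}^d` such that for each `j ∈ {1,…,K}`, exactly
`n_j` coordinates have absolute value `j`. -/
noncomputable def Dset (d K : ℕ) (n : Fin K → ℕ) : Finset (Fin d → ℤ) :=
  (Fintype.piFinset fun _ : Fin d => Finset.Icc (-(K : ℤ)) (K : ℤ)).filter
    (fun x => ∀ j : Fin K,
      (Finset.univ.filter fun i : Fin d => |x i| = (j : ℤ) + 1).card = n j)

/-- Tuples of pairwise disjoint subsets `I₁,…,I_K ⊆ {1,…,d}` with `|I_j| = n_j`. -/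
def tupSet (d K : ℕ) (n : Fin K → ℕ) : Finset (Fin K → Finset (Fin d)) :=
  Finset.univ.filter (fun I => (∀ j : Fin K, (I j).card = n j) ∧
    ∀ a b : Fin K, a ≠ b → Disjoint (I a) (I b))



namespace BetaAux
variable {d K : ℕ}

def kval (I : Fin K → Finset (Fin d)) (i : Fin d) : ℤ :=
  ∑ k : Fin K, if i ∈ I k then ((k : ℤ) + 1) else 0

lemma kval_nonneg (I : Fin K → Finset (Fin d)) (i : Fin d) : 0 ≤ kval I i :=
  Finset.sum_nonneg fun k _ => by positivity

lemma kval_eq_of_mem {I : Fin K → Finset (Fin d)}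
    (hdisj : ∀ a b : Fin K, a ≠ b → Disjoint (I a) (I b)) {i : Fin d} {k : Fin K}
    (hk : i ∈ I k) : kval I i = (k : ℤ) + 1 := by
  rw [kval, Finset.sum_eq_single k]
  · simp [hk]
  · intro b _ hb
    have : i ∉ I b := fun hib =>
      Finset.disjoint_left.mp (hdisj b k hb) hib hk
    simp [this]
  · simp

lemma mem_iff_kval {I : Fin K → Finset (Fin d)}
    (hdisj : ∀ a b : Fin K, a ≠ b → Disjoint (I a) (I b)) {i : Fin d} {k : Fin K} :
    i ∈ I k ↔ kval I i = (k : ℤ) + 1 := by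
  constructor
  · exact kval_eq_of_mem hdisj
  · intro h
    by_cases hex : ∃ j, i ∈ I j
    · obtain ⟨j, hj⟩ := hex
      have := kval_eq_of_mem hdisj hj
      rw [this] at h
      have hjk : j = k := Fin.ext (by omega)
      rwa [hjk] at hj
    · exfalso
      push_neg at hex
      have h0 : kval I i = 0 := by
        rw [kval]; exact Finset.sum_eq_zero fun b _ => by simp [hex b]
      rw [h0] at h
      have : (0:ℤ) ≤ (k:ℤ) := by positivity
      omega

end BetaAux

namespace BetaAux2
open BetaAux
variable {d K : ℕ}

def vset (I : Fin K → Finset (Fin d)) (i : Fin d) : Finset ℤ :=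
  if kval I i = 0 then {0} else {-(kval I i), kval I i}

lemma mem_vset {I : Fin K → Finset (Fin d)} {i : Fin d} {a : ℤ} :
    a ∈ vset I i ↔ |a| = kval I i := by
  unfold vset
  split_ifs with h
  · simp [h, abs_eq_zero]
  · have hpos : (0:ℤ) < kval I i := lt_of_le_of_ne (kval_nonneg _ _) (Ne.symm h)
    rw [abs_eq (le_of_lt hpos)]
    simp [Finset.mem_insert, Finset.mem_singleton]
    tauto

lemma mem_fiber {I : Fin K → Finset (Fin d)} {x : Fin d → ℤ} :
    x ∈ Fintype.piFinset (vset I) ↔ ∀ i, |x i| = kval I i := by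
  simp [Fintype.mem_piFinset, mem_vset]

lemma kval_le {I : Fin K → Finset (Fin d)}
    (hdisj : ∀ a b : Fin K, a ≠ b → Disjoint (I a) (I b)) (i : Fin d) :
    kval I i ≤ (K : ℤ) := by
  by_cases hex : ∃ j, i ∈ I j
  · obtain ⟨j, hj⟩ := hex
    rw [kval_eq_of_mem hdisj hj]
    have : (j : ℕ) < K := j.2
    omega
  · push_neg at hex
    have h0 : kval I i = 0 := by
      rw [kval]; exact Finset.sum_eq_zero fun b _ => by simp [hex b]
    rw [h0]; positivity

lemma filter_eq_of_fiber {n : Fin K → ℕ} {I : Fin K → Finset (Fin d)}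
    (hI : I ∈ tupSet d K n) {x : Fin d → ℤ}
    (hx : ∀ i, |x i| = kval I i) (j : Fin K) :
    (Finset.univ.filter fun i : Fin d => |x i| = (j : ℤ) + 1) = I j := by
  have hdisj := ((Finset.mem_filter.mp hI).2).2
  ext i
  simp only [Finset.mem_filter, Finset.mem_univ, true_and, hx i]
  exact (mem_iff_kval hdisj).symm

lemma Dset_eq (n : Fin K → ℕ) :
    Dset d K n = (tupSet d K n).biUnion (fun I => Fintype.piFinset (vset I)) := by
  ext x
  simp only [Dset, Finset.mem_filter, Fintype.mem_piFinset, Finset.mem_Icc,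
    Finset.mem_biUnion]
  constructor
  · rintro ⟨hbox, hcard⟩
    set I : Fin K → Finset (Fin d) :=
      fun j => Finset.univ.filter fun i : Fin d => |x i| = (j : ℤ) + 1 with hIdef
    have hdisj : ∀ a b : Fin K, a ≠ b → Disjoint (I a) (I b) := by
      intro a b hab
      rw [Finset.disjoint_left]
      intro i hia hib
      simp only [hIdef, Finset.mem_filter] at hia hib
      have : (a : ℤ) + 1 = (b : ℤ) + 1 := by rw [← hia.2, ← hib.2]
      exact hab (Fin.ext (by omega))
    have hItup : I ∈ tupSet d K n := by
      rw [tupSet, Finset.mem_filter]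
      exact ⟨Finset.mem_univ _, hcard, hdisj⟩
    refine ⟨I, hItup, fun i => mem_vset.mpr ?_⟩
    by_cases h0 : |x i| = 0
    · rw [h0]
      symm
      rw [kval]
      refine Finset.sum_eq_zero fun b _ => ?_
      have : i ∉ I b := by
        simp only [hIdef, Finset.mem_filter]
        rintro ⟨-, hb⟩
        have : (0:ℤ) ≤ (b:ℤ) := by positivity
        omega
      simp [this]
    · have habs : |x i| ≤ (K : ℤ) := abs_le.mpr (hbox i)
      have h1 : 1 ≤ |x i| := by have := abs_nonneg (x i); omega
      set m : ℕ := (|x i|).toNat with hm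
      have hmK : m - 1 < K := by omega
      set j : Fin K := ⟨m - 1, hmK⟩ with hj
      have hval : (j : ℕ) = m - 1 := by rw [hj]
      have hij : i ∈ I j := by
        simp only [hIdef, Finset.mem_filter, Finset.mem_univ, true_and]
        try rw [hval]
        omega
      rw [kval_eq_of_mem hdisj hij]
      try rw [hval]
      omega
  · rintro ⟨I, hItup, hfib⟩
    have hx : ∀ i, |x i| = kval I i := fun i => mem_vset.mp (hfib i)
    have hdisj := ((Finset.mem_filter.mp hItup).2).2
    have hcards := ((Finset.mem_filter.mp hItup).2).1
    constructor
    · intro i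
      rw [← abs_le]
      rw [hx i]
      exact kval_le hdisj i
    · intro j
      rw [filter_eq_of_fiber hItup hx j]
      exact hcards j

lemma fibers_disjoint (n : Fin K → ℕ) :
    (↑(tupSet d K n) : Set (Fin K → Finset (Fin d))).PairwiseDisjoint
      (fun I => Fintype.piFinset (vset I)) := by
  intro I hI J hJ hIJ
  show Disjoint (Fintype.piFinset (vset I)) (Fintype.piFinset (vset J))
  rw [Finset.disjoint_left]
  intro x hxI hxJ
  apply hIJ
  have hxI' := mem_fiber.mp hxI
  have hxJ' := mem_fiber.mp hxJ
  have hdI := ((Finset.mem_filter.mp hI).2).2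
  have hdJ := ((Finset.mem_filter.mp hJ).2).2
  funext j
  rw [← filter_eq_of_fiber hI hxI' j, ← filter_eq_of_fiber hJ hxJ' j]

lemma fiber_card {n : Fin K → ℕ} {I : Fin K → Finset (Fin d)}
    (hI : I ∈ tupSet d K n) :
    (Fintype.piFinset (vset I)).card = 2 ^ (∑ j, n j) := by
  have hdisj := ((Finset.mem_filter.mp hI).2).2
  have hcards := ((Finset.mem_filter.mp hI).2).1
  rw [Fintype.card_piFinset]
  have hc : ∀ i, (vset I i).card = if kval I i = 0 then 1 else 2 := by
    intro i
    unfold vset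
    split_ifs with h
    · simp
    · have hpos : (0:ℤ) < kval I i := lt_of_le_of_ne (kval_nonneg _ _) (Ne.symm h)
      rw [Finset.card_insert_of_notMem (by rw [Finset.mem_singleton]; omega), Finset.card_singleton]
  simp_rw [hc]
  rw [Finset.prod_ite, Finset.prod_const, Finset.prod_const, one_pow, one_mul]
  congr 1
  have hset : Finset.univ.filter (fun i : Fin d => ¬ kval I i = 0)
      = Finset.univ.biUnion (fun k : Fin K => I k) := by
    ext i
    simp only [Finset.mem_filter, Finset.mem_univ, true_and, Finset.mem_biUnion]
    constructor
    · intro h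
      by_contra hex
      push_neg at hex
      exact h (by rw [kval]; exact Finset.sum_eq_zero fun b _ => by simp [hex b])
    · rintro ⟨k, hk⟩
      rw [kval_eq_of_mem hdisj hk]
      have : (0:ℤ) ≤ (k:ℤ) := by positivity
      omega
  rw [hset, Finset.card_biUnion (fun a _ b _ hab => hdisj a b hab)]
  simp [hcards]

lemma Dset_card (n : Fin K → ℕ) :
    (Dset d K n).card = (tupSet d K n).card * 2 ^ (∑ j, n j) := by
  rw [Dset_eq n, Finset.card_biUnion
    (fun a ha b hb hab => fibers_disjoint n ha hb hab)]
  rw [Finset.sum_congr rfl (fun I hI => fiber_card hI), Finset.sum_const, smul_eq_mul]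

end BetaAux2

namespace BetaAux3
open BetaAux BetaAux2
variable {d K : ℕ}

lemma two_cos (z : ℂ) :
    Complex.exp (z * Complex.I) + Complex.exp (-(z * Complex.I)) = 2 * Complex.cos z := by
  rw [Complex.cos]; ring

lemma fiber_sum {n : Fin K → ℕ} {I : Fin K → Finset (Fin d)}
    (hI : I ∈ tupSet d K n) (ξ : Fin d → ℝ) :
    (∑ x ∈ Fintype.piFinset (vset I),
      Complex.exp (-(2 * (π : ℂ) * Complex.I) * ∑ i, (x i : ℂ) * (ξ i : ℂ)))
    = ∏ k : Fin K, ∏ i ∈ I k,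
        (2 * Complex.cos (2 * (((k : ℕ) : ℂ) + 1) * (π : ℂ) * (ξ i : ℂ))) := by
  have hdisj := ((Finset.mem_filter.mp hI).2).2
  have h1 : ∀ x : Fin d → ℤ,
      Complex.exp (-(2 * (π : ℂ) * Complex.I) * ∑ i, (x i : ℂ) * (ξ i : ℂ))
      = ∏ i, Complex.exp (-(2 * (π : ℂ) * Complex.I) * ((x i : ℂ) * (ξ i : ℂ))) := by
    intro x
    rw [Finset.mul_sum, Complex.exp_sum]
  have key := Finset.prod_univ_sum (fun i : Fin d => vset I i)
    (fun i a => Complex.exp (-(2 * (π : ℂ) * Complex.I) * ((a : ℂ) * (ξ i : ℂ))))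
  rw [Finset.sum_congr rfl (fun x _ => h1 x), ← key]
  have hone : ∀ i : Fin d, kval I i = 0 →
      (∑ a ∈ vset I i, Complex.exp (-(2 * (π : ℂ) * Complex.I) * ((a : ℂ) * (ξ i : ℂ)))) = 1 := by
    intro i h
    rw [vset, if_pos h]
    simp
  have hcos : ∀ k : Fin K, ∀ i ∈ I k,
      (∑ a ∈ vset I i, Complex.exp (-(2 * (π : ℂ) * Complex.I) * ((a : ℂ) * (ξ i : ℂ))))
      = 2 * Complex.cos (2 * (((k : ℕ) : ℂ) + 1) * (π : ℂ) * (ξ i : ℂ)) := by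
    intro k i hik
    have hv : kval I i = (k : ℤ) + 1 := kval_eq_of_mem hdisj hik
    have hv0 : kval I i ≠ 0 := by rw [hv]; positivity
    rw [vset, if_neg hv0]
    rw [Finset.sum_insert (by rw [Finset.mem_singleton]; omega), Finset.sum_singleton]
    set z : ℂ := 2 * (((k : ℕ) : ℂ) + 1) * (π : ℂ) * (ξ i : ℂ) with hz
    have e1 : -(2 * (π : ℂ) * Complex.I) * (((-(kval I i) : ℤ) : ℂ) * (ξ i : ℂ))
        = z * Complex.I := by
      rw [hz, hv]; push_cast; ring
    have e2 : -(2 * (π : ℂ) * Complex.I) * (((kval I i : ℤ) : ℂ) * (ξ i : ℂ))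
        = -(z * Complex.I) := by
      rw [hz, hv]; push_cast; ring
    rw [e1, e2, two_cos]
  have hsub : Finset.univ.biUnion (fun k : Fin K => I k) ⊆ Finset.univ :=
    Finset.subset_univ _
  rw [← Finset.prod_subset hsub (fun i _ hiS => hone i (by
    by_contra h0
    apply hiS
    rw [Finset.mem_biUnion]
    rcases (by
      by_contra hex
      push_neg at hex
      exact h0 (by rw [kval]; exact Finset.sum_eq_zero fun b _ => by simp [hex b]) :
        ∃ k : Fin K, i ∈ I k) with ⟨k, hk⟩
    exact ⟨k, Finset.mem_univ _, hk⟩))]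
  rw [Finset.prod_biUnion (fun a _ b _ hab => hdisj a b hab)]
  exact Finset.prod_congr rfl fun k _ => Finset.prod_congr rfl fun i hi => hcos k i hi

end BetaAux3


open BetaAux BetaAux2 BetaAux3 in
/-- The multiplier `β_{n̄}(ξ) = (1/|D_{n̄}|) ∑_{x ∈ D_{n̄}} e^{−2πi x·ξ}` equals the
average, over all tuples of pairwise disjoint subsets `I₁,…,I_K ⊆ {1,…,d}` with
`|I_j| = n_j`, of `∏_{k=1}^{K} ∏_{i ∈ I_k} cos(2kπξ_i)`. -/
theorem beta_multiplier_eq_average (d K : ℕ) (hd : 0 < d) (hK : 0 < K)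
    (n : Fin K → ℕ) (hn : ∑ j, n j ≤ d) (ξ : Fin d → ℝ) :
    (1 / ((Dset d K n).card : ℂ)) *
        ∑ x ∈ Dset d K n,
          Complex.exp (-(2 * (π : ℂ) * Complex.I) * ∑ i, (x i : ℂ) * (ξ i : ℂ))
      = (((1 / ((tupSet d K n).card : ℝ)) *
          ∑ I ∈ tupSet d K n,
            ∏ k : Fin K, ∏ i ∈ I k, Real.cos (2 * ((k : ℕ) + 1) * π * ξ i) : ℝ) : ℂ) := by
  classical
  by_cases hT : (tupSet d K n).card = 0
  · have hD0 : (Dset d K n).card = 0 := by rw [Dset_card n, hT, zero_mul]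
    have hDe : Dset d K n = ∅ := Finset.card_eq_zero.mp hD0
    have hTe : tupSet d K n = ∅ := Finset.card_eq_zero.mp hT
    simp [hDe, hTe]
  · have hsum : (∑ x ∈ Dset d K n,
        Complex.exp (-(2 * (π : ℂ) * Complex.I) * ∑ i, (x i : ℂ) * (ξ i : ℂ)))
        = (2:ℂ) ^ (∑ j, n j) * ∑ I ∈ tupSet d K n, ∏ k : Fin K, ∏ i ∈ I k,
            Complex.cos (2 * (((k : ℕ) : ℂ) + 1) * (π : ℂ) * (ξ i : ℂ)) := by
      rw [Dset_eq n, Finset.sum_biUnion (fibers_disjoint n), Finset.mul_sum]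
      refine Finset.sum_congr rfl fun I hI => ?_
      rw [fiber_sum hI ξ]
      have hcards := ((Finset.mem_filter.mp hI).2).1
      calc ∏ k : Fin K, ∏ i ∈ I k,
              (2 * Complex.cos (2 * (((k : ℕ) : ℂ) + 1) * (π : ℂ) * (ξ i : ℂ)))
          = ∏ k : Fin K, ((2:ℂ) ^ (n k) * ∏ i ∈ I k,
              Complex.cos (2 * (((k : ℕ) : ℂ) + 1) * (π : ℂ) * (ξ i : ℂ))) := by
            refine Finset.prod_congr rfl fun k _ => ?_
            rw [Finset.prod_mul_distrib, Finset.prod_const, hcards k]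
        _ = _ := by
            rw [Finset.prod_mul_distrib, Finset.prod_pow_eq_pow_sum]
    have hRHS : (((1 / ((tupSet d K n).card : ℝ)) *
          ∑ I ∈ tupSet d K n,
            ∏ k : Fin K, ∏ i ∈ I k, Real.cos (2 * ((k : ℕ) + 1) * π * ξ i) : ℝ) : ℂ)
        = (1 / ((tupSet d K n).card : ℂ)) * ∑ I ∈ tupSet d K n, ∏ k : Fin K, ∏ i ∈ I k,
            Complex.cos (2 * (((k : ℕ) : ℂ) + 1) * (π : ℂ) * (ξ i : ℂ)) := by
      simp only [Complex.ofReal_mul, Complex.ofReal_sum, Complex.ofReal_prod,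
        Complex.ofReal_div, Complex.ofReal_one, Complex.ofReal_natCast,
        Complex.ofReal_cos, Complex.ofReal_ofNat, Complex.ofReal_add]
    rw [hsum, hRHS, Dset_card n]
    have h2 : ((2:ℂ)) ^ (∑ j, n j) ≠ 0 := pow_ne_zero _ two_ne_zero
    have hTc : ((tupSet d K n).card : ℂ) ≠ 0 := Nat.cast_ne_zero.mpr hT
    push_cast
    field_simp
    ring_nf
    exact Finset.sum_congr rfl fun I _ => Finset.prod_congr rfl fun k _ =>
      Finset.prod_congr rfl fun i _ => by congr 1; ring
end
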